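/- arXiv:2101.08298 — 2 statements merged into one kernel-verified Lean document; each statement's English description precedes it below -/
import Mathlib

section
/- There exists an absolute constant C > 0 with the following property. Let n, s be positive integers with n ≥ e·s, let λ > 0, and let z₁, …, z_n be real-valued random variables on a common probability space (not necessarily independent and not necessarily identically distributed) such that each z_i is centered (E[z_i] = 0), has variance 1, and satisfies ‖z_i‖_{L^p} ≤ λ√p for every real p with 2 ≤ p ≤ 2·log(n/s). Then (E[Σ_{i=1}^s (z_i*)²])^{1/2} ≤ C·λ·√(s·log(n/s)), where z_i* denotes the i-th largest value among |z₁|, …, |z_n|. -/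
open MeasureTheory ProbabilityTheory Finset

/-- The `i`-th coordinate of the non-increasing rearrangement of the absolute
values of the coordinates of `w`, i.e. the `(i+1)`-th largest among `|w 0|, …, |w (n-1)|`. -/
noncomputable def decRearrange {n : ℕ} (w : Fin n → ℝ) : Fin n → ℝ :=
  fun i => |w ((Tuple.sort fun j => -|w j|) i)|

/-!
Fix `p = log (n / s) ≥ 1`. Hölder's inequality on the `s` largest coordinates gives, pointwise,
`(∑_{i<s} (z_i^*)²)^p ≤ s^(p-1) ∑_j |z_j|^(2p)`. Taking `p`-th roots, Jensen's inequality for the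
concave map `t ↦ t^(1/p)` and the moment bound `E|z_j|^(2p) ≤ (λ √(2p))^(2p)` yield
`E ∑_{i<s} (z_i^*)² ≤ (s^(p-1) n)^(1/p) · 2pλ² = 2e λ² s log (n / s)`,
because `(n / s)^(1 / log (n / s)) = e`.
-/

open Real

section Rearrangement

variable {n : ℕ} (w : Fin n → ℝ)

lemma sum_comp_decRearrange (f : ℝ → ℝ) :
    ∑ i, f (decRearrange w i) = ∑ j, f |w j| :=
  Equiv.sum_comp (Tuple.sort fun j => -|w j|) (fun j => f |w j|)

lemma decRearrange_nonneg (i : Fin n) : 0 ≤ decRearrange w i :=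
  abs_nonneg _

lemma sum_sq_decRearrange_rpow_le (s : ℕ) {p : ℝ} (hp : 1 ≤ p) :
    (∑ i ∈ univ.filter (fun i : Fin n => (i : ℕ) < s), decRearrange w i ^ 2) ^ p
      ≤ (s : ℝ) ^ (p - 1) * ∑ j, |w j| ^ (2 * p) := by
  have hcard : (#(univ.filter fun i : Fin n => (i : ℕ) < s) : ℝ) ≤ s := by
    exact_mod_cast Fin.card_filter_val_lt.trans_le (min_le_right n s)
  have hsq : ∀ x : ℝ, 0 ≤ x → (x ^ 2) ^ p = x ^ (2 * p) := fun x hx => by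
    rw [rpow_mul hx, rpow_two]
  calc _ ≤ (#(univ.filter fun i : Fin n => (i : ℕ) < s) : ℝ) ^ (p - 1)
          * ∑ i ∈ univ.filter (fun i : Fin n => (i : ℕ) < s), (decRearrange w i ^ 2) ^ p :=
        Real.rpow_sum_le_const_mul_sum_rpow_of_nonneg _ hp fun i _ => sq_nonneg _
    _ ≤ (s : ℝ) ^ (p - 1) * ∑ i, decRearrange w i ^ (2 * p) := by
        rw [sum_congr rfl fun i _ => hsq _ (decRearrange_nonneg w i)]
        have hpow_nonneg : ∀ i, 0 ≤ decRearrange w i ^ (2 * p) :=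
          fun i => rpow_nonneg (decRearrange_nonneg w i) _
        exact mul_le_mul (rpow_le_rpow (Nat.cast_nonneg _) hcard (by linarith))
          (sum_le_sum_of_subset_of_nonneg (subset_univ _) fun i _ _ => hpow_nonneg i)
          (sum_nonneg fun i _ => hpow_nonneg i) (by positivity)
    _ = (s : ℝ) ^ (p - 1) * ∑ j, |w j| ^ (2 * p) := by
        rw [sum_comp_decRearrange w (· ^ (2 * p))]

end Rearrangement

section Moments

variable {Ω : Type*} [MeasurableSpace Ω] {μ : Measure Ω}

lemma integral_abs_rpow_le_of_eLpNorm_le {f : Ω → ℝ} {q B : ℝ} (hq : 0 < q) (hB : 0 ≤ B)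
    (hf : MemLp f (ENNReal.ofReal q) μ) (h : eLpNorm f (ENNReal.ofReal q) μ ≤ ENNReal.ofReal B) :
    ∫ ω, |f ω| ^ q ∂μ ≤ B ^ q := by
  rw [hf.eLpNorm_eq_integral_rpow_norm (by simpa using hq) ENNReal.ofReal_ne_top,
    ENNReal.ofReal_le_ofReal_iff hB, ENNReal.toReal_ofReal hq.le] at h
  simp only [Real.norm_eq_abs] at h
  have hI : 0 ≤ ∫ ω, |f ω| ^ q ∂μ := integral_nonneg fun ω => by positivity
  calc ∫ ω, |f ω| ^ q ∂μ = ((∫ ω, |f ω| ^ q ∂μ) ^ q⁻¹) ^ q := (rpow_inv_rpow hI hq.ne').symm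
    _ ≤ B ^ q := rpow_le_rpow (by positivity) h hq.le

variable [IsProbabilityMeasure μ]

lemma integrable_rpow_of_le_one {Y : Ω → ℝ} (hY : 0 ≤ᵐ[μ] Y) (hi : Integrable Y μ) {c : ℝ}
    (hc0 : 0 ≤ c) (hc1 : c ≤ 1) : Integrable (fun ω => Y ω ^ c) μ := by
  refine ((integrable_const 1).add hi).mono'
    ((continuous_rpow_const hc0).comp_aestronglyMeasurable hi.aestronglyMeasurable) ?_
  filter_upwards [hY] with ω (hω : 0 ≤ Y ω)
  rw [Real.norm_eq_abs, abs_of_nonneg (rpow_nonneg hω c)]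
  change Y ω ^ c ≤ 1 + Y ω
  rcases le_total (Y ω) 1 with h | h
  · linarith [rpow_le_one hω h hc0]
  · have := rpow_le_rpow_of_exponent_le h hc1
    rw [rpow_one] at this
    linarith

lemma integral_rpow_le_rpow_integral {Y : Ω → ℝ} (hY : 0 ≤ᵐ[μ] Y) (hi : Integrable Y μ) {c : ℝ}
    (hc0 : 0 ≤ c) (hc1 : c ≤ 1) : ∫ ω, Y ω ^ c ∂μ ≤ (∫ ω, Y ω ∂μ) ^ c :=
  (concaveOn_rpow hc0 hc1).le_map_integral (continuous_rpow_const hc0).continuousOn isClosed_Ici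
    hY hi (integrable_rpow_of_le_one hY hi hc0 hc1)

end Moments

theorem integral_sum_sq_decRearrange_le {Ω : Type*} [MeasurableSpace Ω] {μ : Measure Ω}
    [IsProbabilityMeasure μ] {n : ℕ} (s : ℕ) {z : Fin n → Ω → ℝ}
    (hz : ∀ i, AEStronglyMeasurable (z i) μ) {p B : ℝ} (hp : 1 ≤ p) (hB : 0 ≤ B)
    (hmom : ∀ i, eLpNorm (z i) (ENNReal.ofReal (2 * p)) μ ≤ ENNReal.ofReal B) :
    ∫ ω, ∑ i ∈ univ.filter (fun i : Fin n => (i : ℕ) < s), decRearrange (fun j => z j ω) i ^ 2 ∂μ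
      ≤ ((s : ℝ) ^ (p - 1) * n) ^ p⁻¹ * B ^ 2 := by
  have h2p : 0 < 2 * p := by linarith
  have hmemLp : ∀ j, MemLp (z j) (ENNReal.ofReal (2 * p)) μ :=
    fun j => ⟨hz j, (hmom j).trans_lt ENNReal.ofReal_lt_top⟩
  have hint : ∀ j, Integrable (fun ω => |z j ω| ^ (2 * p)) μ := fun j => by
    have := (hmemLp j).integrable_norm_rpow (ENNReal.ofReal_pos.2 h2p).ne' ENNReal.ofReal_ne_top
    rw [ENNReal.toReal_ofReal h2p.le] at this
    simpa only [Real.norm_eq_abs] using this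
  set Y : Ω → ℝ := fun ω => (s : ℝ) ^ (p - 1) * ∑ j, |z j ω| ^ (2 * p) with hY
  have hY0 : 0 ≤ᵐ[μ] Y := ae_of_all _ fun ω => by positivity
  have hYint : Integrable Y μ := (integrable_finsetSum _ fun j _ => hint j).const_mul _
  have hEY : ∫ ω, Y ω ∂μ ≤ (s : ℝ) ^ (p - 1) * n * B ^ (2 * p) := by
    rw [hY, integral_const_mul, integral_finsetSum _ fun j _ => hint j, mul_assoc]
    gcongr
    simpa using sum_le_card_nsmul univ _ _ fun j _ =>
      integral_abs_rpow_le_of_eLpNorm_le h2p hB (hmemLp j) (hmom j)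
  have hpointwise : ∀ ω, ∑ i ∈ univ.filter (fun i : Fin n => (i : ℕ) < s),
      decRearrange (fun j => z j ω) i ^ 2 ≤ Y ω ^ p⁻¹ := fun ω => by
    have hS : 0 ≤ ∑ i ∈ univ.filter (fun i : Fin n => (i : ℕ) < s),
        decRearrange (fun j => z j ω) i ^ 2 := sum_nonneg fun i _ => sq_nonneg _
    rw [← rpow_rpow_inv hS (by linarith : p ≠ 0)]
    exact rpow_le_rpow (by positivity) (sum_sq_decRearrange_rpow_le _ s hp) (by positivity)
  calc _ ≤ ∫ ω, Y ω ^ p⁻¹ ∂μ :=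
        integral_mono_of_nonneg (ae_of_all _ fun ω => sum_nonneg fun i _ => sq_nonneg _)
          (integrable_rpow_of_le_one hY0 hYint (by positivity) (inv_le_one_of_one_le₀ hp))
          (ae_of_all _ hpointwise)
    _ ≤ (∫ ω, Y ω ∂μ) ^ p⁻¹ :=
        integral_rpow_le_rpow_integral hY0 hYint (by positivity) (inv_le_one_of_one_le₀ hp)
    _ ≤ ((s : ℝ) ^ (p - 1) * n * B ^ (2 * p)) ^ p⁻¹ :=
        rpow_le_rpow (integral_nonneg_of_ae hY0) hEY (by positivity)
    _ = ((s : ℝ) ^ (p - 1) * n) ^ p⁻¹ * B ^ 2 := by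
        rw [mul_rpow (by positivity) (by positivity), ← rpow_mul hB,
          mul_inv_cancel_right₀ (by linarith), rpow_two]

lemma rpow_sub_one_mul_rpow_inv_log_div {s n : ℝ} (hs : 0 < s) (hn : 0 < n)
    (hL : log (n / s) ≠ 0) : (s ^ (log (n / s) - 1) * n) ^ (log (n / s))⁻¹ = exp 1 * s := by
  have hsplit : s ^ (log (n / s) - 1) * n = s ^ log (n / s) * (n / s) := by
    rw [rpow_sub_one hs.ne']
    ring
  rw [hsplit, mul_rpow (by positivity) (by positivity), rpow_rpow_inv hs.le hL,
    rpow_def_of_pos (by positivity), mul_inv_cancel₀ hL, mul_comm]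

/-- Generalization of Mendelson's Lemma 6.5: a bound on the expected
sum of squares of the `s` largest coordinates of a random vector with `2 log(n/s)`
well-behaved moments, without independence or identical distribution assumptions. -/
theorem stmt0 :
    ∃ C : ℝ, 0 < C ∧
      ∀ (n s : ℕ), 0 < n → 0 < s → Real.exp 1 * s ≤ n →
      ∀ lam : ℝ, 0 < lam →
      ∀ (Ω : Type) (_ : MeasurableSpace Ω) (μ : Measure Ω), IsProbabilityMeasure μ →
      ∀ z : Fin n → Ω → ℝ,
        (∀ i, Measurable (z i)) →
        (∀ i, ∫ ω, z i ω ∂μ = 0) →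
        (∀ i, ∫ ω, (z i ω) ^ 2 ∂μ = 1) →
        (∀ i, ∀ p : ℝ, 2 ≤ p → p ≤ 2 * Real.log (n / s) →
          eLpNorm (z i) (ENNReal.ofReal p) μ ≤ ENNReal.ofReal (lam * Real.sqrt p)) →
        (∫ ω, ∑ i ∈ Finset.univ.filter (fun i : Fin n => (i : ℕ) < s),
            (decRearrange (fun j => z j ω) i) ^ 2 ∂μ) ^ ((1 : ℝ) / 2)
          ≤ C * lam * Real.sqrt (s * Real.log (n / s)) := by
  refine ⟨4, by norm_num, fun n s hn hs hns lam hlam Ω _ μ _ z hz _ _ hmom => ?_⟩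
  set L := log ((n : ℝ) / s)
  have hs0 : (0 : ℝ) < s := by exact_mod_cast hs
  have hL1 : 1 ≤ L := by
    rw [← log_exp 1]
    exact log_le_log (exp_pos 1) ((le_div_iff₀ hs0).2 hns)
  have hE := integral_sum_sq_decRearrange_le s (fun i => (hz i).aestronglyMeasurable) hL1
    (by positivity) fun i => hmom i (2 * L) (by linarith) le_rfl
  rw [rpow_sub_one_mul_rpow_inv_log_div hs0 (by exact_mod_cast hn) (by linarith)] at hE
  have hsqrt_two_exp : sqrt (2 * exp 1) ≤ 4 := by
    rw [sqrt_le_left (by norm_num)]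
    linarith [exp_one_lt_d9]
  calc _ ≤ (exp 1 * s * (lam * sqrt (2 * L)) ^ 2) ^ ((1 : ℝ) / 2) :=
        rpow_le_rpow (integral_nonneg fun ω => sum_nonneg fun i _ => sq_nonneg _) hE
          (by norm_num)
    _ = sqrt (2 * exp 1) * lam * sqrt (s * L) := by
        rw [← sqrt_eq_rpow, ← sqrt_sq (by positivity : 0 ≤ sqrt (2 * exp 1) * lam * sqrt (s * L))]
        congr 1
        rw [mul_pow, mul_pow, mul_pow, sq_sqrt (by positivity), sq_sqrt (by positivity),
          sq_sqrt (by positivity)]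
        ring
    _ ≤ 4 * lam * sqrt (s * L) := by gcongr
end

section
/- Let n, d be positive integers, j ∈ [n], λ > 0, and let v ∈ ℝ^d be a fixed nonzero vector. Let d₁, …, d_n be i.i.d. random vectors in ℝ^d such that, with p := log(e·n/j), the moment bound ‖⟨d₁, v⟩‖_{L^p} ≤ λ·√p·‖v‖₂ holds. Then for every real u ≥ e, the probability that the j-th largest value among |⟨d₁, v⟩|, …, |⟨d_n, v⟩| is at least u·λ·‖v‖₂·√(log(e·n/j)) is at most (e/u)^{j·log(e·n/j)}. -/
open MeasureTheory ProbabilityTheory Finset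

/-!
If the `j`-th largest of the `|⟨dᵢ, v⟩|` is at least `t`, then some `j` of them are, and by
independence each `j`-subset does so with probability at most `q ^ j`, where Markov's inequality
in `L^p` gives `q ≤ u^{-p}`. A union bound over the `C(n, j) ≤ (e n / j)^j = e^{p j}` subsets
yields `(e^p u^{-p})^j = (e / u)^{j p}`.
-/

open Real

lemma exists_card_eq_forall_le_abs_of_le_decRearrange {n : ℕ} (w : Fin n → ℝ) (k : Fin n)
    {t : ℝ} (h : t ≤ decRearrange w k) : ∃ S : Finset (Fin n), #S = k + 1 ∧ ∀ i ∈ S, t ≤ |w i| := by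
  set σ := Tuple.sort fun i => -|w i|
  refine ⟨(Iic k).image σ, by rw [card_image_of_injective _ σ.injective, Fin.card_Iic], ?_⟩
  intro _ hi
  obtain ⟨l, hl, rfl⟩ := mem_image.1 hi
  have hσ : |w (σ k)| ≤ |w (σ l)| := by
    simpa using Tuple.monotone_sort (fun i => -|w i|) (mem_Iic.1 hl)
  exact h.trans hσ

lemma Nat.choose_le_exp_one_mul_div_pow (n : ℕ) {j : ℕ} (hj : j ≠ 0) :
    (n.choose j : ℝ) ≤ (exp 1 * n / j) ^ j := by
  have hj' : (0 : ℝ) < j := by positivity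
  calc (n.choose j : ℝ) ≤ n ^ j / j.factorial := Nat.choose_le_pow_div j n
    _ = j ^ j / j.factorial * (n / j) ^ j := by rw [div_pow]; field_simp
    _ ≤ exp j * (n / j) ^ j := by gcongr; exact pow_div_factorial_le_exp _ hj'.le j
    _ = (exp 1 * n / j) ^ j := by rw [mul_div_assoc, mul_pow, exp_one_pow]

lemma measure_le_abs_le_of_eLpNorm_le {Ω : Type*} [MeasurableSpace Ω] {μ : Measure Ω}
    {X : Ω → ℝ} (hX : AEStronglyMeasurable X μ) {p M t : ℝ} (hp : 0 < p) (hM : 0 ≤ M)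
    (ht : 0 < t) (hXM : eLpNorm X (ENNReal.ofReal p) μ ≤ ENNReal.ofReal M) :
    μ {ω | t ≤ |X ω|} ≤ ENNReal.ofReal ((M / t) ^ p) := by
  have hmarkov := meas_ge_le_mul_pow_eLpNorm_enorm μ (by simpa using hp) ENNReal.ofReal_ne_top hX
    (ENNReal.ofReal_pos.2 ht).ne' (by simp)
  simp only [ENNReal.toReal_ofReal hp.le, ← ofReal_norm, Real.norm_eq_abs,
    ENNReal.ofReal_le_ofReal_iff (abs_nonneg _)] at hmarkov
  calc _ ≤ _ := hmarkov
    _ ≤ (ENNReal.ofReal t)⁻¹ ^ p * ENNReal.ofReal M ^ p := by gcongr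
    _ = ENNReal.ofReal ((M / t) ^ p) := by
      rw [← ENNReal.ofReal_inv_of_pos ht, ENNReal.ofReal_rpow_of_nonneg (by positivity) hp.le,
        ENNReal.ofReal_rpow_of_nonneg hM hp.le, ← ENNReal.ofReal_mul (by positivity),
        ← Real.mul_rpow (by positivity) hM, inv_mul_eq_div]

lemma ProbabilityTheory.iIndepFun.measure_biUnion_powersetCard_le {Ω ι β : Type*}
    [MeasurableSpace Ω] {μ : Measure Ω} [Fintype ι] [MeasurableSpace β] {X : ι → Ω → β}
    (hX : iIndepFun X μ) {A : Set β} (hA : MeasurableSet A) {q : ENNReal}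
    (hq : ∀ i, μ (X i ⁻¹' A) ≤ q) (j : ℕ) :
    μ (⋃ S ∈ powersetCard j (univ : Finset ι), ⋂ i ∈ S, X i ⁻¹' A) ≤
      (Fintype.card ι).choose j * q ^ j := by
  calc _ ≤ ∑ S ∈ powersetCard j (univ : Finset ι), μ (⋂ i ∈ S, X i ⁻¹' A) :=
        measure_biUnion_finset_le _ _
    _ ≤ ∑ _S ∈ powersetCard j (univ : Finset ι), q ^ j := by
      refine sum_le_sum fun S hS => ?_
      rw [hX.meas_biInter fun i _ => ⟨A, hA, rfl⟩, ← (mem_powersetCard.1 hS).2]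
      exact prod_le_pow_card _ _ _ fun i _ => hq i
    _ = _ := by simp [card_powersetCard]

lemma one_le_log_exp_one_mul_div {n j : ℕ} (hj : 1 ≤ j) (hjn : j ≤ n) :
    1 ≤ log (exp 1 * n / j) := by
  have hj' : (0 : ℝ) < j := by exact_mod_cast hj
  have hn : (0 : ℝ) < n := hj'.trans_le (by exact_mod_cast hjn)
  rw [le_log_iff_exp_le (by positivity), le_div_iff₀ hj']
  gcongr

lemma choose_mul_rpow_pow_le_div_rpow {n j : ℕ} (hj : 1 ≤ j) (hjn : j ≤ n) {u : ℝ}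
    (hu : 0 < u) :
    (n.choose j : ℝ) * (u⁻¹ ^ log (exp 1 * n / j)) ^ j ≤
      (exp 1 / u) ^ ((j : ℝ) * log (exp 1 * n / j)) := by
  have hj' : (0 : ℝ) < j := by exact_mod_cast hj
  have hn : (0 : ℝ) < n := hj'.trans_le (by exact_mod_cast hjn)
  rw [mul_comm (j : ℝ), rpow_mul (by positivity), rpow_natCast, div_eq_mul_inv (exp 1) u,
    mul_rpow (by positivity) (by positivity), exp_one_rpow, exp_log (by positivity), mul_pow]
  gcongr
  exact Nat.choose_le_exp_one_mul_div_pow n (by omega)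

/-- Tail bound for the `j`-th largest marginal: if `d₁, …, d_n` are
i.i.d. random vectors with `‖⟨d₁, v⟩‖_{L^p} ≤ λ·√p·‖v‖₂` for `p = log(e·n/j)`, then
for `u ≥ e`, the `j`-th largest of `|⟨dᵢ, v⟩|` exceeds `u·λ·‖v‖₂·√(log(e·n/j))` with
probability at most `(e/u)^{j·log(e·n/j)}`. -/
theorem stmt16 :
    ∀ (n d j : ℕ) (_hn : 0 < n) (_hd : 0 < d) (hj : 1 ≤ j) (hjn : j ≤ n),
    ∀ lam : ℝ, 0 < lam →
    ∀ v : Fin d → ℝ, v ≠ 0 →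
    ∀ (Ω : Type) (_ : MeasurableSpace Ω) (μ : Measure Ω), IsProbabilityMeasure μ →
    ∀ ds : Fin n → Ω → Fin d → ℝ, (∀ i, Measurable (ds i)) →
      -- the `dᵢ` are i.i.d.
      iIndepFun ds μ →
      (∀ i i', Measure.map (ds i) μ = Measure.map (ds i') μ) →
      -- moment bound at level `p = log (e·n/j)`
      (∀ i, eLpNorm (fun ω => ∑ t, ds i ω t * v t)
          (ENNReal.ofReal (Real.log (Real.exp 1 * n / j))) μ ≤
        ENNReal.ofReal (lam * Real.sqrt (Real.log (Real.exp 1 * n / j)) *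
          Real.sqrt (∑ t, v t ^ 2))) →
    ∀ u : ℝ, Real.exp 1 ≤ u →
      μ {ω | u * lam * Real.sqrt (∑ t, v t ^ 2) *
            Real.sqrt (Real.log (Real.exp 1 * n / j)) ≤
          decRearrange (fun i => ∑ t, ds i ω t * v t) ⟨j - 1, by omega⟩} ≤
        ENNReal.ofReal
          ((Real.exp 1 / u) ^ ((j : ℝ) * Real.log (Real.exp 1 * n / j))) := by
  intro n d j _ _ hj hjn lam hlam v hv Ω _ μ _ ds hds hind _ hmom u hu
  set p := log (exp 1 * n / j)
  set X : Fin n → Ω → ℝ := fun i ω => ∑ t, ds i ω t * v t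
  set t₀ := u * lam * √(∑ t, v t ^ 2) * √p
  have hp : 0 < p := one_pos.trans_le (one_le_log_exp_one_mul_div hj hjn)
  have hu0 : 0 < u := (exp_pos 1).trans_le hu
  have hv0 : 0 < √(∑ t, v t ^ 2) := by
    obtain ⟨t, ht⟩ := Function.ne_iff.1 hv
    exact sqrt_pos.2 (sum_pos' (fun _ _ => sq_nonneg _) ⟨t, mem_univ t, pow_two_pos_of_ne_zero ht⟩)
  have hXm (i : Fin n) : Measurable (X i) := by fun_prop
  have hX : iIndepFun X μ := hind.comp (fun _ w => ∑ t, w t * v t) fun _ => by fun_prop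
  have htail (i : Fin n) : μ (X i ⁻¹' {x | t₀ ≤ |x|}) ≤ ENNReal.ofReal (u⁻¹ ^ p) := by
    have hratio : lam * √p * √(∑ t, v t ^ 2) / t₀ = u⁻¹ := by
      simp only [t₀]; field_simp
    rw [← hratio]
    exact measure_le_abs_le_of_eLpNorm_le (hXm i).aestronglyMeasurable hp (by positivity)
      (by positivity) (hmom i)
  have hsub : {ω | t₀ ≤ decRearrange (X · ω) ⟨j - 1, by omega⟩} ⊆
      ⋃ S ∈ powersetCard j univ, ⋂ i ∈ S, X i ⁻¹' {x | t₀ ≤ |x|} := fun ω hω => by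
    obtain ⟨S, hS, hle⟩ := exists_card_eq_forall_le_abs_of_le_decRearrange _ _ hω
    simp only [Set.mem_iUnion, Set.mem_iInter, mem_powersetCard]
    exact ⟨S, ⟨subset_univ S, by simp only at hS; omega⟩, hle⟩
  calc _ ≤ _ := measure_mono hsub
    _ ≤ n.choose j * ENNReal.ofReal (u⁻¹ ^ p) ^ j := by
      simpa using hX.measure_biUnion_powersetCard_le
        (measurableSet_le measurable_const measurable_id.abs) htail j
    _ ≤ _ := by
      rw [← ENNReal.ofReal_natCast, ← ENNReal.ofReal_pow (by positivity),
        ← ENNReal.ofReal_mul (by positivity)]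
      exact ENNReal.ofReal_le_ofReal (choose_mul_rpow_pow_le_div_rpow hj hjn hu0)
end
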